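/- arXiv:cs/0412106 — 2 statements merged into one kernel-verified Lean document; each statement's English description precedes it below -/
import Mathlib

section
/- A deal (b, p) with b ∈ B and p ∈ ℝ is Pareto efficient if and only if b ∈ B*. -/
/-- A deal (b, p) is Pareto efficient (no other deal weakly improves both
bargainers' net monetary values and strictly improves at least one) if and only if
b ∈ B*, i.e. b has maximal gains from trade. -/
theorem stmt1 (B : Type*) [Fintype B] [Nonempty B] (vc vs : B → ℝ) (b : B) (p : ℝ) :
    (¬ ∃ (b' : B) (p' : ℝ),
        vc b - p ≤ vc b' - p' ∧ p - vs b ≤ p' - vs b' ∧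
        (vc b - p < vc b' - p' ∨ p - vs b < p' - vs b')) ↔
    (∀ b' : B, vc b' - vs b' ≤ vc b - vs b) := by
  constructor
  · intro h b'
    by_contra hlt
    push_neg at hlt
    apply h
    refine ⟨b', vs b' + (p - vs b) + ((vc b' - vs b') - (vc b - vs b)) / 2, by linarith, by linarith, Or.inl (by linarith)⟩
  · rintro h ⟨b', p', h1, h2, h3⟩
    have := h b'
    rcases h3 with h3 | h3 <;> linarith
end

section
/- If b ∈ B*, then the deal (b, p) is Pareto efficient for every price p ∈ ℝ; that is, there is no deal (b', p') that weakly improves both the customer's and the shop's net monetary value and strictly improves at least one of them. -/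
/-- If b ∈ B* (b has maximal gains from trade), then for every price p
the deal (b, p) is Pareto efficient: no deal (b', p') weakly improves both the
customer's and the shop's net monetary value while strictly improving at least one. -/
theorem stmt2 (B : Type*) [Fintype B] [Nonempty B] (vc vs : B → ℝ) (b : B)
    (hb : ∀ b' : B, vc b' - vs b' ≤ vc b - vs b) (p : ℝ) :
    ¬ ∃ (b' : B) (p' : ℝ),
        vc b - p ≤ vc b' - p' ∧ p - vs b ≤ p' - vs b' ∧
        (vc b - p < vc b' - p' ∨ p - vs b < p' - vs b') := by
  rintro ⟨b', p', h1, h2, h3 | h3⟩ <;> have := hb b' <;> linarith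
end
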